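/- arXiv:1203.4860 — 7 statements merged into one kernel-verified Lean document; each statement's English description precedes it below -/
import Mathlib

section
/- Consider the k-graph Δ_k with vertices ℤ^k, morphisms {(m,n) ∈ ℤ^k × ℤ^k : m ≤ n}, r(m,n)=m, s(m,n)=n, composition (m,n)(n,p)=(m,p), and degree d(m,n)=n−m. The action α of ℕ^k on Δ_k given by α_p(m,n) = (m+p, n+p) is free, but it admits no fundamental domain. -/
/-- The data of a `k`-graph: a small category with range `r`, source `s`,
identities `ι`, partially-defined composition `comp`, and a degree map `d` into `ℕ^k`. -/
structure KGraphData (k : ℕ) where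
  Obj : Type
  Mor : Type
  r : Mor → Obj
  s : Mor → Obj
  ι : Obj → Mor
  comp : (p q : Mor) → s p = r q → Mor
  d : Mor → (Fin k → ℕ)

/-- The axioms making the data of a `k`-graph into an actual `k`-graph
(category axioms, functoriality of `d`, and the unique factorisation property). -/
structure IsKGraph {k : ℕ} (Λ : KGraphData k) : Prop where
  r_ι : ∀ v, Λ.r (Λ.ι v) = v
  s_ι : ∀ v, Λ.s (Λ.ι v) = v
  d_ι : ∀ v, Λ.d (Λ.ι v) = 0
  r_comp : ∀ p q h, Λ.r (Λ.comp p q h) = Λ.r p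
  s_comp : ∀ p q h, Λ.s (Λ.comp p q h) = Λ.s q
  d_comp : ∀ p q h, Λ.d (Λ.comp p q h) = Λ.d p + Λ.d q
  id_comp : ∀ (p : Λ.Mor) (h : Λ.s (Λ.ι (Λ.r p)) = Λ.r p), Λ.comp (Λ.ι (Λ.r p)) p h = p
  comp_id : ∀ (p : Λ.Mor) (h : Λ.s p = Λ.r (Λ.ι (Λ.s p))), Λ.comp p (Λ.ι (Λ.s p)) h = p
  assoc : ∀ (p q t : Λ.Mor) (h1 : Λ.s p = Λ.r q) (h2 : Λ.s q = Λ.r t)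
    (h3 : Λ.s (Λ.comp p q h1) = Λ.r t) (h4 : Λ.s p = Λ.r (Λ.comp q t h2)),
    Λ.comp (Λ.comp p q h1) t h3 = Λ.comp p (Λ.comp q t h2) h4
  factor : ∀ (l : Λ.Mor) (m n : Fin k → ℕ), Λ.d l = m + n →
    ∃! pq : Λ.Mor × Λ.Mor, ∃ h : Λ.s pq.1 = Λ.r pq.2,
      Λ.d pq.1 = m ∧ Λ.d pq.2 = n ∧ Λ.comp pq.1 pq.2 h = l

/-- A morphism of `k`-graphs: a degree-preserving functor. -/
structure KGraphHom {k : ℕ} (Λ Sg : KGraphData k) where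
  obj : Λ.Obj → Sg.Obj
  mor : Λ.Mor → Sg.Mor
  map_r : ∀ p, Sg.r (mor p) = obj (Λ.r p)
  map_s : ∀ p, Sg.s (mor p) = obj (Λ.s p)
  map_ι : ∀ v, mor (Λ.ι v) = Sg.ι (obj v)
  map_comp : ∀ (p q : Λ.Mor) (h : Λ.s p = Λ.r q) (h' : Sg.s (mor p) = Sg.r (mor q)),
    mor (Λ.comp p q h) = Sg.comp (mor p) (mor q) h'
  map_d : ∀ p, Sg.d (mor p) = Λ.d p

/-- The skew-product `k`-graph `Λ ×_η S` determined by a functor `η : Λ → S`. -/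
def KGraphData.skew {k : ℕ} (Λ : KGraphData k) (S : Type) [Monoid S] (η : Λ.Mor → S) :
    KGraphData k where
  Obj := Λ.Obj × S
  Mor := Λ.Mor × S
  r p := (Λ.r p.1, p.2)
  s p := (Λ.s p.1, p.2 * η p.1)
  ι v := (Λ.ι v.1, v.2)
  comp p q h := (Λ.comp p.1 q.1 (congrArg Prod.fst h), p.2)
  d p := Λ.d p.1

/-- `F` is a fundamental domain for the action `α` of `S` on (the morphisms of) `Sg`:
every morphism is `α t μ` for exactly one pair `(μ, t) ∈ F × S`,
and `F` is closed under taking ranges. -/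
def IsFundDomain {k : ℕ} (Sg : KGraphData k) (S : Type) [Monoid S]
    (α : S → Sg.Mor → Sg.Mor) (F : Set Sg.Mor) : Prop :=
  (∀ σ : Sg.Mor, ∃! p : Sg.Mor × S, p.1 ∈ F ∧ α p.2 p.1 = σ) ∧
    ∀ μ ∈ F, Sg.ι (Sg.r μ) ∈ F

/-- A Cuntz–Krieger `Λ`-family in a `*`-algebra. -/
structure IsCKFamily {k : ℕ} (Λ : KGraphData k) (A : Type*) [NonUnitalRing A] [StarRing A]
    (T : Λ.Mor → A) : Prop where
  ck1_sa : ∀ v, star (T (Λ.ι v)) = T (Λ.ι v)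
  ck1_idem : ∀ v, T (Λ.ι v) * T (Λ.ι v) = T (Λ.ι v)
  ck1_orth : ∀ v w, v ≠ w → T (Λ.ι v) * T (Λ.ι w) = 0
  ck2 : ∀ (p q : Λ.Mor) (h : Λ.s p = Λ.r q), T (Λ.comp p q h) = T p * T q
  ck3 : ∀ p, star (T p) * T p = T (Λ.ι (Λ.s p))
  ck4 : ∀ (v : Λ.Obj) (n : Fin k → ℕ) (F : Finset Λ.Mor),
    (∀ p, p ∈ F ↔ (Λ.r p = v ∧ Λ.d p = n)) →
    T (Λ.ι v) = F.sum fun p => T p * star (T p)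

/-- Row-finite: finitely many paths of each degree into each vertex. -/
def RowFinite {k : ℕ} (Λ : KGraphData k) : Prop :=
  ∀ (v : Λ.Obj) (n : Fin k → ℕ), {p : Λ.Mor | Λ.r p = v ∧ Λ.d p = n}.Finite

/-- No sources: every vertex receives a path of each degree. -/
def NoSources {k : ℕ} (Λ : KGraphData k) : Prop :=
  ∀ (v : Λ.Obj) (n : Fin k → ℕ), ∃ p : Λ.Mor, Λ.r p = v ∧ Λ.d p = n

/-- The `k`-graph `Δ_k`: vertices `ℤ^k`, morphisms pairs `(m, n)` with `m ≤ n`,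
`r(m,n) = m`, `s(m,n) = n`, composition `(m,n)(n,p) = (m,p)`, degree `d(m,n) = n - m`. -/
def delta (k : ℕ) : KGraphData k where
  Obj := Fin k → ℤ
  Mor := {p : (Fin k → ℤ) × (Fin k → ℤ) // p.1 ≤ p.2}
  r p := p.1.1
  s p := p.1.2
  ι v := ⟨(v, v), le_refl v⟩
  comp p q h := ⟨(p.1.1, q.1.2), le_trans p.2 (le_of_le_of_eq (le_of_eq h) rfl |>.trans q.2)⟩
  d p := fun i => (p.1.2 i - p.1.1 i).toNat

/-- The translation action of `ℕ^k` on `Δ_k`: `α_p(m, n) = (m + p, n + p)`. -/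
def deltaAct (k : ℕ) (p : Fin k → ℕ) (σ : (delta k).Mor) : (delta k).Mor :=
  ⟨(σ.1.1 + fun i => (p i : ℤ), σ.1.2 + fun i => (p i : ℤ)),
    add_le_add_left σ.2 _⟩

/-!
A fundamental domain `F` must represent every identity `ι v`, and a translate is an identity
only if it is a translate of an identity; so `F` contains some `ι w`, and `ι (w - e)` is
`α_p (ι u)` with `ι u ∈ F`, for a unit vector `e`. Then `ι w = α_{p + e} (ι u) = α_0 (ι w)`
gives two representations of `ι w`, although `p + e ≠ 0`.
-/

namespace delta

variable {k : ℕ}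

@[ext]
theorem mor_ext {σ τ : (delta k).Mor} (h₁ : σ.1.1 = τ.1.1) (h₂ : σ.1.2 = τ.1.2) : σ = τ :=
  Subtype.ext (Prod.ext h₁ h₂)

theorem d_eq_iff (σ : (delta k).Mor) (m : Fin k → ℕ) :
    (delta k).d σ = m ↔ σ.1.2 = σ.1.1 + fun i => (m i : ℤ) := by
  have hle : ∀ i, σ.1.1 i ≤ σ.1.2 i := σ.2
  simp only [funext_iff, Pi.add_apply]
  refine forall_congr' fun i => ?_
  have := hle i
  change (σ.1.2 i - σ.1.1 i).toNat = m i ↔ _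
  omega

theorem d_comp (σ τ : (delta k).Mor) (h : σ.1.2 = τ.1.1) :
    (delta k).d ((delta k).comp σ τ h) = (delta k).d σ + (delta k).d τ := by
  funext i
  have h₁ : σ.1.1 i ≤ σ.1.2 i := σ.2 i
  have h₂ : τ.1.1 i ≤ τ.1.2 i := τ.2 i
  have h₃ := congrFun h i
  change (τ.1.2 i - σ.1.1 i).toNat = (σ.1.2 i - σ.1.1 i).toNat + (τ.1.2 i - τ.1.1 i).toNat
  omega

theorem factor (σ : (delta k).Mor) (m n : Fin k → ℕ) (hd : (delta k).d σ = m + n) :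
    ∃! pq : (delta k).Mor × (delta k).Mor, ∃ h : (delta k).s pq.1 = (delta k).r pq.2,
      (delta k).d pq.1 = m ∧ (delta k).d pq.2 = n ∧ (delta k).comp pq.1 pq.2 h = σ := by
  set c : Fin k → ℤ := σ.1.1 + fun i => (m i : ℤ)
  have hb : σ.1.2 = c + fun i => (n i : ℤ) := by
    rw [d_eq_iff] at hd
    rw [hd, add_assoc]
    rfl
  have hac : σ.1.1 ≤ c := fun i => by simp [c]
  have hcb : c ≤ σ.1.2 := fun i => by simp [hb]
  refine ⟨(⟨(σ.1.1, c), hac⟩, ⟨(c, σ.1.2), hcb⟩),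
    ⟨rfl, (d_eq_iff _ _).2 rfl, (d_eq_iff _ _).2 hb, rfl⟩, ?_⟩
  rintro ⟨μ, ν⟩ ⟨h, hμ, hν, hcomp⟩
  have hμa : μ.1.1 = σ.1.1 := congrArg (·.1.1) hcomp
  have hνb : ν.1.2 = σ.1.2 := congrArg (·.1.2) hcomp
  have hμc : μ.1.2 = c := by rw [(d_eq_iff _ _).1 hμ, hμa]
  have hνc : ν.1.1 = c := h.symm.trans hμc
  exact Prod.ext (mor_ext hμa hμc) (mor_ext hνc hνb)

theorem isKGraph : IsKGraph (delta k) where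
  r_ι _ := rfl
  s_ι _ := rfl
  d_ι _ := by funext; simp [delta]
  r_comp _ _ _ := rfl
  s_comp _ _ _ := rfl
  d_comp := d_comp
  id_comp _ _ := rfl
  comp_id _ _ := rfl
  assoc _ _ _ _ _ _ _ := rfl
  factor := factor

end delta

section deltaAct

variable {k : ℕ}

theorem deltaAct_zero (σ : (delta k).Mor) : deltaAct k 0 σ = σ := by
  ext <;> simp [deltaAct]

theorem deltaAct_ι (p : Fin k → ℕ) (w : Fin k → ℤ) :
    deltaAct k p ((delta k).ι w) = (delta k).ι (w + fun i => (p i : ℤ)) :=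
  rfl

theorem deltaAct_left_injective (σ : (delta k).Mor) : Function.Injective (deltaAct k · σ) := by
  intro p q h
  funext i
  have := congrFun (congrArg (·.1.1) h) i
  simpa [deltaAct] using this

theorem eq_ι_of_deltaAct_eq_ι {p : Fin k → ℕ} {μ : (delta k).Mor} {v : Fin k → ℤ}
    (h : deltaAct k p μ = (delta k).ι v) :
    μ = (delta k).ι μ.1.1 ∧ (μ.1.1 + fun i => (p i : ℤ)) = v := by
  have h₁ : (μ.1.1 + fun i => (p i : ℤ)) = v := congrArg (·.1.1) h
  have h₂ : (μ.1.2 + fun i => (p i : ℤ)) = v := congrArg (·.1.2) h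
  exact ⟨delta.mor_ext rfl (add_right_cancel (h₂.trans h₁.symm)), h₁⟩

end deltaAct

theorem eq_zero_of_act_mem_eq_mem {M S : Type*} [AddMonoid S] {α : S → M → M}
    (hα : ∀ x, α 0 x = x) {F : Set M}
    (hF : ∀ σ, ∃! mp : M × S, mp.1 ∈ F ∧ α mp.2 mp.1 = σ)
    {μ ν : M} (hμ : μ ∈ F) (hν : ν ∈ F) {p : S} (h : α p ν = μ) : p = 0 := by
  obtain ⟨_, -, huniq⟩ := hF μ
  exact congrArg Prod.snd ((huniq (ν, p) ⟨hν, h⟩).trans (huniq (μ, 0) ⟨hμ, hα μ⟩).symm)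

/-- `Δ_k` is a `k`-graph, the translation action of `ℕ^k` on `Δ_k` is free,
but it admits no fundamental domain (for `k ≥ 1`). -/
theorem delta_free_action_no_fundamental_domain (k : ℕ) (hk : 1 ≤ k) :
    IsKGraph (delta k) ∧
    (∀ (p q : Fin k → ℕ) (σ : (delta k).Mor), deltaAct k p σ = deltaAct k q σ → p = q) ∧
    ¬ ∃ F : Set (delta k).Mor,
        (∀ σ : (delta k).Mor, ∃! mp : (delta k).Mor × (Fin k → ℕ),
            mp.1 ∈ F ∧ deltaAct k mp.2 mp.1 = σ) ∧
        (∀ μ ∈ F, (delta k).ι ((delta k).r μ) ∈ F) := by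
  refine ⟨delta.isKGraph, fun p q σ h => deltaAct_left_injective σ h, ?_⟩
  rintro ⟨F, hF, -⟩
  have hrep : ∀ v, ∃ w : Fin k → ℤ, ∃ p : Fin k → ℕ,
      (delta k).ι w ∈ F ∧ (w + fun i => (p i : ℤ)) = v := fun v => by
    obtain ⟨⟨μ, p⟩, ⟨hμF, hμ⟩, -⟩ := hF ((delta k).ι v)
    obtain ⟨hμι, hμv⟩ := eq_ι_of_deltaAct_eq_ι hμ
    exact ⟨μ.1.1, p, hμι ▸ hμF, hμv⟩
  let e : Fin k → ℕ := Pi.single ⟨0, hk⟩ 1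
  obtain ⟨w, -, hw, -⟩ := hrep 0
  obtain ⟨u, p, hu, hup⟩ := hrep (w - fun i => (e i : ℤ))
  have htrans : deltaAct k (p + e) ((delta k).ι u) = (delta k).ι w := by
    refine (deltaAct_ι _ _).trans (congrArg (delta k).ι (funext fun i => ?_))
    have := congrFun hup i
    simp only [Pi.add_apply, Pi.sub_apply] at this ⊢
    push_cast
    omega
  have hpe : p + e = 0 := eq_zero_of_act_mem_eq_mem deltaAct_zero hF hw hu htrans
  simpa [e] using congrFun hpe ⟨0, hk⟩
end

section
/- Let S be an Ore semigroup acting freely on a k-graph Σ by the action α, admitting a fundamental domain F. Then the quotient S\Σ of Σ by the equivalence relation λ ∼ μ ⟺ ∃ t,u ∈ S with α_t(λ) = α_u(μ) is a k-graph, with degree d([λ]) = d(λ), range r([λ]) = [r(λ)], source s([λ]) = [s(λ)], and composition [λ][μ] = [α_t(λ)α_u(μ)] where t,u ∈ S satisfy α_t(s(λ)) = α_u(r(μ)); this composition is well-defined independent of the choices of t, u and of representatives, and the quotient map q : λ ↦ [λ] is a k-graph morphism. -/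
/-!
Two paths are identified when they have a common image under the action; the Ore condition makes
this an equivalence relation, and range, source, identities and degree are equivariant, so they
descend to the classes. Two classes are composable exactly when they have composable
representatives, and the class of the composite does not depend on the choice: by the Ore
condition two choices can be pushed to a common image, and if `s(λ) = r(μ)` while `α_t(λ)` and
`α_u(μ)` are composable, then `α_t(s λ) = α_u(s λ)`, so `t = u` by freeness and the composite is
`α_t(λμ)`. The axioms of the quotient are then checked on representatives; for unique
factorisation, two factorisations of equivalent paths are pushed to a common image, where they
coincide.
-/

section OreOrbits

variable (S : Type*) {X Y : Type*} [Monoid S] [MulAction S X] [MulAction S Y]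

def oreOrbitRel (x y : X) : Prop := ∃ t u : S, t • x = u • y

abbrev OreOrbits (X : Type*) [MulAction S X] : Type _ := Quot (oreOrbitRel S (X := X))

variable {S}

theorem equivalence_oreOrbitRel (hOre : ∀ t u : S, ∃ x y : S, x * t = y * u) :
    Equivalence (oreOrbitRel S (X := X)) where
  refl _ := ⟨1, 1, rfl⟩
  symm := fun ⟨t, u, h⟩ => ⟨u, t, h.symm⟩
  trans := by
    rintro x y z ⟨t, u, hxy⟩ ⟨v, w, hyz⟩
    obtain ⟨a, b, hab⟩ := hOre u v
    exact ⟨a * t, b * w, by rw [mul_smul, hxy, ← mul_smul, hab, mul_smul, hyz, mul_smul]⟩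

def OreOrbits.mk (x : X) : OreOrbits S X := Quot.mk _ x

theorem OreOrbits.mk_surjective : Function.Surjective (mk : X → OreOrbits S X) :=
  Quot.mk_surjective

theorem OreOrbits.mk_smul (t : S) (x : X) : (mk (t • x) : OreOrbits S X) = mk x :=
  Quot.sound ⟨1, t, one_smul S _⟩

theorem OreOrbits.mk_eq_mk_iff (hOre : ∀ t u : S, ∃ x y : S, x * t = y * u) {x y : X} :
    (mk x : OreOrbits S X) = mk y ↔ ∃ t u : S, t • x = u • y :=
  (equivalence_oreOrbitRel hOre).quot_mk_eq_iff x y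

def OreOrbits.map (f : X → Y) (hf : ∀ (t : S) x, f (t • x) = t • f x) :
    OreOrbits S X → OreOrbits S Y :=
  Quot.map f fun _ _ ⟨t, u, h⟩ => ⟨t, u, by rw [← hf, h, hf]⟩

end OreOrbits

theorem KGraphData.comp_congr {k : ℕ} (Λ : KGraphData k) {p p' q q' : Λ.Mor}
    (h : Λ.s p = Λ.r q) (h' : Λ.s p' = Λ.r q') (hp : p = p') (hq : q = q') :
    Λ.comp p q h = Λ.comp p' q' h' := by
  subst hp hq
  rfl

theorem IsKGraph.eq_of_comp_eq {k : ℕ} {Λ : KGraphData k} (hΛ : IsKGraph Λ)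
    {p q p' q' : Λ.Mor}
    (h : Λ.s p = Λ.r q) (h' : Λ.s p' = Λ.r q') (hd : Λ.d p = Λ.d p')
    (he : Λ.comp p q h = Λ.comp p' q' h') : p = p' ∧ q = q' := by
  have hdq : Λ.d q = Λ.d q' := by
    have := congrArg Λ.d he
    rw [hΛ.d_comp, hΛ.d_comp, hd] at this
    exact add_left_cancel this
  have hfac := hΛ.factor (Λ.comp p q h) (Λ.d p) (Λ.d q) (hΛ.d_comp p q h)
  exact Prod.ext_iff.mp <| hfac.unique (y₁ := (p, q)) (y₂ := (p', q'))
    ⟨h, rfl, rfl, rfl⟩ ⟨h', hd.symm, hdq.symm, he.symm⟩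

section KGraphAction

variable {k : ℕ} {Sg : KGraphData k} {S : Type*} [Monoid S] [MulAction S Sg.Obj]
  [MulAction S Sg.Mor]

variable (Sg S) in
structure IsKGraphAction : Prop where
  r_smul : ∀ (t : S) p, Sg.r (t • p) = t • Sg.r p
  s_smul : ∀ (t : S) p, Sg.s (t • p) = t • Sg.s p
  ι_smul : ∀ (t : S) v, Sg.ι (t • v) = t • Sg.ι v
  d_smul : ∀ (t : S) p, Sg.d (t • p) = Sg.d p
  smul_comp : ∀ (t : S) p q (h : Sg.s p = Sg.r q) (h' : Sg.s (t • p) = Sg.r (t • q)),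
    t • Sg.comp p q h = Sg.comp (t • p) (t • q) h'

theorem IsKGraphAction.of_kGraphHom
    (hφ : ∀ t : S, ∃ φ : KGraphHom Sg Sg, φ.obj = (t • ·) ∧ φ.mor = (t • ·)) :
    IsKGraphAction Sg S := by
  choose φ hobj hmor using hφ
  have ho (t : S) v : t • v = (φ t).obj v := (congrFun (hobj t) v).symm
  have hm (t : S) p : t • p = (φ t).mor p := (congrFun (hmor t) p).symm
  refine ⟨fun t p => ?_, fun t p => ?_, fun t v => ?_, fun t p => ?_, fun t p q h h' => ?_⟩
  · rw [ho, hm, (φ t).map_r]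
  · rw [ho, hm, (φ t).map_s]
  · rw [ho, hm, (φ t).map_ι]
  · rw [hm, (φ t).map_d]
  · simp only [hm] at h' ⊢
    exact (φ t).map_comp p q h h'

theorem IsKGraphAction.composable_smul (hA : IsKGraphAction Sg S) (t : S) {p q : Sg.Mor}
    (h : Sg.s p = Sg.r q) : Sg.s (t • p) = Sg.r (t • q) := by
  rw [hA.s_smul, hA.r_smul, h]

theorem IsKGraphAction.eq_of_composable (hA : IsKGraphAction Sg S)
    (hfree : ∀ (t u : S) (x : Sg.Mor), t • x = u • x → t = u) {x y : Sg.Mor} {t u : S}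
    (hxy : Sg.s x = Sg.r y) (h : Sg.s (t • x) = Sg.r (u • y)) : t = u :=
  hfree t u (Sg.ι (Sg.s x)) <| by
    rw [← hA.ι_smul, ← hA.ι_smul, ← hA.s_smul, h, hA.r_smul, hxy]

open OreOrbits

theorem IsKGraphAction.mk_comp_eq_mk_comp (hA : IsKGraphAction Sg S)
    (hOre : ∀ t u : S, ∃ x y : S, x * t = y * u)
    (hfree : ∀ (t u : S) (x : Sg.Mor), t • x = u • x → t = u) {x y x' y' : Sg.Mor}
    (h : Sg.s x = Sg.r y) (h' : Sg.s x' = Sg.r y')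
    (hx : (OreOrbits.mk x : OreOrbits S _) = OreOrbits.mk x')
    (hy : (OreOrbits.mk y : OreOrbits S _) = OreOrbits.mk y') :
    (OreOrbits.mk (Sg.comp x y h) : OreOrbits S _) = OreOrbits.mk (Sg.comp x' y' h') := by
  obtain ⟨p, p', hp⟩ := (mk_eq_mk_iff hOre).mp hx
  obtain ⟨q, q', hq⟩ := (mk_eq_mk_iff hOre).mp hy
  obtain ⟨c, e, hce⟩ := hOre p q
  have hx' : (c * p) • x = (c * p') • x' := by rw [mul_smul, hp, mul_smul]
  have hy' : (c * p) • y = (e * q') • y' := by rw [hce, mul_smul, hq, mul_smul]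
  have hce' : c * p' = e * q' := hA.eq_of_composable hfree h' <| by
    rw [← hx', ← hy']
    exact hA.composable_smul _ h
  rw [← mk_smul (c * p) (Sg.comp x y h), ← mk_smul (c * p') (Sg.comp x' y' h'),
    hA.smul_comp _ _ _ h (hA.composable_smul _ h),
    hA.smul_comp _ _ _ h' (hA.composable_smul _ h')]
  exact congrArg OreOrbits.mk (Sg.comp_congr _ _ hx' (hy'.trans (by rw [hce'])))

theorem IsKGraphAction.exists_composable_lift (hA : IsKGraphAction Sg S)
    (hOre : ∀ t u : S, ∃ x y : S, x * t = y * u) {P Q : OreOrbits S Sg.Mor}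
    (h : map Sg.s hA.s_smul P = map Sg.r hA.r_smul Q) :
    ∃ xy : Sg.Mor × Sg.Mor,
      Sg.s xy.1 = Sg.r xy.2 ∧ OreOrbits.mk xy.1 = P ∧ OreOrbits.mk xy.2 = Q := by
  obtain ⟨x, rfl⟩ := mk_surjective P
  obtain ⟨y, rfl⟩ := mk_surjective Q
  obtain ⟨t, u, htu⟩ := (mk_eq_mk_iff hOre).mp h
  exact ⟨(t • x, u • y), by rw [hA.s_smul, hA.r_smul, htu], mk_smul t x, mk_smul u y⟩

noncomputable def KGraphData.orbitQuotient (hA : IsKGraphAction Sg S)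
    (hOre : ∀ t u : S, ∃ x y : S, x * t = y * u) : KGraphData k where
  Obj := OreOrbits S Sg.Obj
  Mor := OreOrbits S Sg.Mor
  r := map Sg.r hA.r_smul
  s := map Sg.s hA.s_smul
  ι := map Sg.ι hA.ι_smul
  comp _ _ h := OreOrbits.mk (Sg.comp _ _ (hA.exists_composable_lift hOre h).choose_spec.1)
  d := Quot.lift Sg.d fun _ _ ⟨t, u, h⟩ => by rw [← hA.d_smul t, h, hA.d_smul]

theorem KGraphData.orbitQuotient_comp_eq (hA : IsKGraphAction Sg S)
    (hOre : ∀ t u : S, ∃ x y : S, x * t = y * u)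
    (hfree : ∀ (t u : S) (x : Sg.Mor), t • x = u • x → t = u)
    {P Q : OreOrbits S Sg.Mor} (h : (Sg.orbitQuotient hA hOre).s P = (Sg.orbitQuotient hA hOre).r Q)
    {x y : Sg.Mor} (hxy : Sg.s x = Sg.r y) (hx : OreOrbits.mk x = P) (hy : OreOrbits.mk y = Q) :
    (Sg.orbitQuotient hA hOre).comp P Q h = OreOrbits.mk (Sg.comp x y hxy) := by
  obtain ⟨hc, hx', hy'⟩ := (hA.exists_composable_lift hOre h).choose_spec
  exact hA.mk_comp_eq_mk_comp hOre hfree hc hxy (hx'.trans hx.symm) (hy'.trans hy.symm)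

noncomputable def KGraphData.orbitQuotientMap (hA : IsKGraphAction Sg S)
    (hOre : ∀ t u : S, ∃ x y : S, x * t = y * u)
    (hfree : ∀ (t u : S) (x : Sg.Mor), t • x = u • x → t = u) :
    KGraphHom Sg (Sg.orbitQuotient hA hOre) where
  obj := OreOrbits.mk
  mor := OreOrbits.mk
  map_r _ := rfl
  map_s _ := rfl
  map_ι _ := rfl
  map_comp _ _ h _ := (Sg.orbitQuotient_comp_eq hA hOre hfree _ h rfl rfl).symm
  map_d _ := rfl

theorem IsKGraphAction.exists_composable_lift₃ (hA : IsKGraphAction Sg S)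
    (hOre : ∀ t u : S, ∃ x y : S, x * t = y * u) {P Q T : OreOrbits S Sg.Mor}
    (h₁ : (Sg.orbitQuotient hA hOre).s P = (Sg.orbitQuotient hA hOre).r Q)
    (h₂ : (Sg.orbitQuotient hA hOre).s Q = (Sg.orbitQuotient hA hOre).r T) :
    ∃ (x y z : Sg.Mor) (_ : Sg.s x = Sg.r y) (_ : Sg.s y = Sg.r z),
      OreOrbits.mk x = P ∧ OreOrbits.mk y = Q ∧ OreOrbits.mk z = T := by
  obtain ⟨⟨x, y⟩, hxy, rfl, rfl⟩ := hA.exists_composable_lift hOre h₁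
  obtain ⟨⟨y', z⟩, hyz, hy, rfl⟩ :=
    hA.exists_composable_lift hOre (P := OreOrbits.mk y) h₂
  obtain ⟨a, b, hab⟩ := (mk_eq_mk_iff hOre).mp hy
  exact ⟨b • x, b • y, a • z, hA.composable_smul b hxy,
    by rw [← hab]; exact hA.composable_smul a hyz, mk_smul _ _, mk_smul _ _, mk_smul _ _⟩

theorem KGraphData.orbitQuotient_factor (hΛ : IsKGraph Sg) (hA : IsKGraphAction Sg S)
    (hOre : ∀ t u : S, ∃ x y : S, x * t = y * u)
    (hfree : ∀ (t u : S) (x : Sg.Mor), t • x = u • x → t = u)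
    (L : OreOrbits S Sg.Mor) (m n : Fin k → ℕ) (hd : (Sg.orbitQuotient hA hOre).d L = m + n) :
    ∃! PQ : OreOrbits S Sg.Mor × OreOrbits S Sg.Mor,
      ∃ h : (Sg.orbitQuotient hA hOre).s PQ.1 = (Sg.orbitQuotient hA hOre).r PQ.2,
        (Sg.orbitQuotient hA hOre).d PQ.1 = m ∧ (Sg.orbitQuotient hA hOre).d PQ.2 = n ∧
          (Sg.orbitQuotient hA hOre).comp PQ.1 PQ.2 h = L := by
  obtain ⟨l, rfl⟩ := mk_surjective L
  obtain ⟨⟨p, q⟩, ⟨hpq, hdp, hdq, rfl⟩, -⟩ := hΛ.factor l m n hd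
  refine ⟨(OreOrbits.mk p, OreOrbits.mk q), ⟨congrArg OreOrbits.mk hpq, hdp, hdq,
    Sg.orbitQuotient_comp_eq hA hOre hfree _ hpq rfl rfl⟩, ?_⟩
  rintro ⟨P, Q⟩ ⟨h, hdP, -, hPQ⟩
  obtain ⟨⟨x, y⟩, hxy, rfl, rfl⟩ := hA.exists_composable_lift hOre h
  rw [Sg.orbitQuotient_comp_eq hA hOre hfree h hxy rfl rfl] at hPQ
  obtain ⟨a, b, hab⟩ := (mk_eq_mk_iff hOre).mp hPQ
  rw [hA.smul_comp a x y hxy (hA.composable_smul a hxy),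
    hA.smul_comp b p q hpq (hA.composable_smul b hpq)] at hab
  have hd' : Sg.d (a • x) = Sg.d (b • p) := by
    rw [hA.d_smul, hA.d_smul]
    exact hdP.trans hdp.symm
  obtain ⟨hx, hy⟩ := hΛ.eq_of_comp_eq _ _ hd' hab
  ext
  · exact (mk_smul a x).symm.trans ((congrArg OreOrbits.mk hx).trans (mk_smul b p))
  · exact (mk_smul a y).symm.trans ((congrArg OreOrbits.mk hy).trans (mk_smul b q))

theorem KGraphData.isKGraph_orbitQuotient (hΛ : IsKGraph Sg) (hA : IsKGraphAction Sg S)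
    (hOre : ∀ t u : S, ∃ x y : S, x * t = y * u)
    (hfree : ∀ (t u : S) (x : Sg.Mor), t • x = u • x → t = u) :
    IsKGraph (Sg.orbitQuotient hA hOre) where
  r_ι := by
    rintro ⟨v⟩
    exact congrArg OreOrbits.mk (hΛ.r_ι v)
  s_ι := by
    rintro ⟨v⟩
    exact congrArg OreOrbits.mk (hΛ.s_ι v)
  d_ι := by
    rintro ⟨v⟩
    exact hΛ.d_ι v
  r_comp P Q h := by
    obtain ⟨⟨x, y⟩, hxy, rfl, rfl⟩ := hA.exists_composable_lift hOre h
    rw [Sg.orbitQuotient_comp_eq hA hOre hfree h hxy rfl rfl]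
    exact congrArg OreOrbits.mk (hΛ.r_comp x y hxy)
  s_comp P Q h := by
    obtain ⟨⟨x, y⟩, hxy, rfl, rfl⟩ := hA.exists_composable_lift hOre h
    rw [Sg.orbitQuotient_comp_eq hA hOre hfree h hxy rfl rfl]
    exact congrArg OreOrbits.mk (hΛ.s_comp x y hxy)
  d_comp P Q h := by
    obtain ⟨⟨x, y⟩, hxy, rfl, rfl⟩ := hA.exists_composable_lift hOre h
    rw [Sg.orbitQuotient_comp_eq hA hOre hfree h hxy rfl rfl]
    exact hΛ.d_comp x y hxy
  id_comp := by
    rintro ⟨x⟩ h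
    exact (Sg.orbitQuotient_comp_eq hA hOre hfree h (hΛ.s_ι _) rfl rfl).trans
      (congrArg OreOrbits.mk (hΛ.id_comp x _))
  comp_id := by
    rintro ⟨x⟩ h
    exact (Sg.orbitQuotient_comp_eq hA hOre hfree h (hΛ.r_ι _).symm rfl rfl).trans
      (congrArg OreOrbits.mk (hΛ.comp_id x _))
  assoc P Q T h₁ h₂ h₃ h₄ := by
    obtain ⟨x, y, z, hxy, hyz, rfl, rfl, rfl⟩ := hA.exists_composable_lift₃ hOre h₁ h₂
    have hxy_z : Sg.s (Sg.comp x y hxy) = Sg.r z := (hΛ.s_comp x y hxy).trans hyz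
    have hx_yz : Sg.s x = Sg.r (Sg.comp y z hyz) := hxy.trans (hΛ.r_comp y z hyz).symm
    rw [Sg.orbitQuotient_comp_eq hA hOre hfree h₃ hxy_z
        (Sg.orbitQuotient_comp_eq hA hOre hfree h₁ hxy rfl rfl).symm rfl,
      Sg.orbitQuotient_comp_eq hA hOre hfree h₄ hx_yz rfl
        (Sg.orbitQuotient_comp_eq hA hOre hfree h₂ hyz rfl rfl).symm]
    exact congrArg OreOrbits.mk (hΛ.assoc x y z hxy hyz hxy_z hx_yz)
  factor := Sg.orbitQuotient_factor hΛ hA hOre hfree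

end KGraphAction

theorem quotient_isKGraph_general (k : ℕ) (Sg : KGraphData k) (hSg : IsKGraph Sg)
    (S : Type) [Monoid S]
    (hOre : ∀ t u : S, ∃ x y : S, x * t = y * u)
    (αo : S → Sg.Obj → Sg.Obj) (αm : S → Sg.Mor → Sg.Mor)
    (hhom : ∀ u : S, ∃ hom : KGraphHom Sg Sg, hom.obj = αo u ∧ hom.mor = αm u)
    (hone_o : αo 1 = id) (hone_m : αm 1 = id)
    (hmul_o : ∀ t u : S, αo (t * u) = αo t ∘ αo u)
    (hmul_m : ∀ t u : S, αm (t * u) = αm t ∘ αm u)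
    (hfree : ∀ (t u : S) (x : Sg.Mor), αm t x = αm u x → t = u) :
    ∃ (Q : KGraphData k) (q : KGraphHom Sg Q),
      IsKGraph Q ∧
      Function.Surjective q.mor ∧ Function.Surjective q.obj ∧
      (∀ x y : Sg.Mor, q.mor x = q.mor y ↔ ∃ t u : S, αm t x = αm u y) ∧
      (∀ v w : Sg.Obj, q.obj v = q.obj w ↔ ∃ t u : S, αo t v = αo u w) ∧
      (∀ (x y : Sg.Mor) (t u : S) (h : Sg.s (αm t x) = Sg.r (αm u y))
          (h' : Q.s (q.mor x) = Q.r (q.mor y)),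
        Q.comp (q.mor x) (q.mor y) h' = q.mor (Sg.comp (αm t x) (αm u y) h)) := by
  let : MulAction S Sg.Obj :=
    { smul := αo, one_smul := congrFun hone_o, mul_smul := fun t u => congrFun (hmul_o t u) }
  let : MulAction S Sg.Mor :=
    { smul := αm, one_smul := congrFun hone_m, mul_smul := fun t u => congrFun (hmul_m t u) }
  have hA : IsKGraphAction Sg S := .of_kGraphHom hhom
  exact ⟨Sg.orbitQuotient hA hOre, Sg.orbitQuotientMap hA hOre hfree,
    Sg.isKGraph_orbitQuotient hSg hA hOre hfree, OreOrbits.mk_surjective, OreOrbits.mk_surjective,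
    fun _ _ => OreOrbits.mk_eq_mk_iff hOre, fun _ _ => OreOrbits.mk_eq_mk_iff hOre,
    fun x y t u h h' => Sg.orbitQuotient_comp_eq hA hOre hfree h' h
      (OreOrbits.mk_smul t x) (OreOrbits.mk_smul u y)⟩

/-- If an Ore semigroup `S` acts freely on a `k`-graph `Σ` with a fundamental domain,
then the quotient `S\Σ` is a `k`-graph: there is a `k`-graph `Q` and a surjective
`k`-graph morphism `q : Σ → Q` identifying exactly the orbit equivalence classes,
whose composition satisfies `[λ][μ] = [α_t(λ) α_u(μ)]` for any `t, u` making
`α_t(λ)` and `α_u(μ)` composable. -/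
theorem quotient_isKGraph (k : ℕ) (Sg : KGraphData k) (hSg : IsKGraph Sg)
    (S : Type) [Monoid S] [IsCancelMul S]
    (hOre : ∀ t u : S, ∃ x y : S, x * t = y * u)
    (αo : S → Sg.Obj → Sg.Obj) (αm : S → Sg.Mor → Sg.Mor)
    (hhom : ∀ u : S, ∃ hom : KGraphHom Sg Sg, hom.obj = αo u ∧ hom.mor = αm u)
    (hone_o : αo 1 = id) (hone_m : αm 1 = id)
    (hmul_o : ∀ t u : S, αo (t * u) = αo t ∘ αo u)
    (hmul_m : ∀ t u : S, αm (t * u) = αm t ∘ αm u)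
    (hfree : ∀ (t u : S) (x : Sg.Mor), αm t x = αm u x → t = u)
    (F : Set Sg.Mor) (hF : IsFundDomain Sg S αm F) :
    ∃ (Q : KGraphData k) (q : KGraphHom Sg Q),
      IsKGraph Q ∧
      Function.Surjective q.mor ∧ Function.Surjective q.obj ∧
      (∀ x y : Sg.Mor, q.mor x = q.mor y ↔ ∃ t u : S, αm t x = αm u y) ∧
      (∀ v w : Sg.Obj, q.obj v = q.obj w ↔ ∃ t u : S, αo t v = αo u w) ∧
      (∀ (x y : Sg.Mor) (t u : S) (h : Sg.s (αm t x) = Sg.r (αm u y))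
          (h' : Q.s (q.mor x) = Q.r (q.mor y)),
        Q.comp (q.mor x) (q.mor y) h' = q.mor (Sg.comp (αm t x) (αm u y) h)) :=
  quotient_isKGraph_general k Sg hSg S hOre αo αm hhom hone_o hone_m hmul_o hmul_m hfree
end

section
/- Gross–Tucker theorem for Ore semigroup actions on k-graphs: Suppose α is a free action of an Ore semigroup S on a k-graph Σ admitting a fundamental domain F. Let q : Σ → S\Σ be the quotient map, and define c : S\Σ → F by q(c(λ)) = λ, η : S\Σ → S by s(c(λ)) = α_{η(λ)}(c(s(λ))), and ξ : Σ → S by σ = α_{ξ(σ)}(c(q(σ))). Then η is a functor into S, and φ(σ) := (q(σ), ξ(σ)) is a k-graph isomorphism of Σ onto the skew product (S\Σ) ×_η S with inverse φ⁻¹(λ,t) = α_t(c(λ)), satisfying φ ∘ α_t = lt_t ∘ φ for all t ∈ S. -/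
/-! Every `σ` is `α_{ξ σ}(c (q σ))` with `c (q σ) ∈ F`, and this representation is unique, so
`ξ σ = t` as soon as `σ = α_t μ` for some `μ ∈ F`. This identifies `ξ` on translates, ranges and
sources, and gives the cocycle identity `ξ (s σ) = ξ σ * η (q σ)`. Functoriality of `η` follows by
evaluating that identity on the composable pair `c λ`, `α_{η λ}(c λ')` lying over `(λ, λ')`. -/

def IsKGraphHom {k : ℕ} {Λ Λ' : KGraphData k} (fo : Λ.Obj → Λ'.Obj) (fm : Λ.Mor → Λ'.Mor) :
    Prop :=
  ∃ φ : KGraphHom Λ Λ', φ.obj = fo ∧ φ.mor = fm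

namespace IsKGraphHom

variable {k : ℕ} {Λ Λ' : KGraphData k} {fo : Λ.Obj → Λ'.Obj} {fm : Λ.Mor → Λ'.Mor}

theorem map_r (h : IsKGraphHom fo fm) (p : Λ.Mor) : Λ'.r (fm p) = fo (Λ.r p) := by
  obtain ⟨φ, rfl, rfl⟩ := h
  exact φ.map_r p

theorem map_s (h : IsKGraphHom fo fm) (p : Λ.Mor) : Λ'.s (fm p) = fo (Λ.s p) := by
  obtain ⟨φ, rfl, rfl⟩ := h
  exact φ.map_s p

theorem map_ι (h : IsKGraphHom fo fm) (v : Λ.Obj) : fm (Λ.ι v) = Λ'.ι (fo v) := by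
  obtain ⟨φ, rfl, rfl⟩ := h
  exact φ.map_ι v

end IsKGraphHom

theorem IsKGraph.leftInverse_r_ι {k : ℕ} {Λ : KGraphData k} (hΛ : IsKGraph Λ) :
    Function.LeftInverse Λ.r Λ.ι :=
  hΛ.r_ι

theorem IsKGraph.ι_injective {k : ℕ} {Λ : KGraphData k} (hΛ : IsKGraph Λ) :
    Function.Injective Λ.ι :=
  hΛ.leftInverse_r_ι.injective

theorem IsKGraph.skew_leftInverse_r_ι {k : ℕ} {Λ : KGraphData k} (hΛ : IsKGraph Λ)
    (S : Type) [Monoid S] (η : Λ.Mor → S) :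
    Function.LeftInverse (Λ.skew S η).r (Λ.skew S η).ι :=
  fun v => Prod.ext (hΛ.r_ι v.1) rfl

theorem KGraphHom.bijective_obj {k : ℕ} {Λ Λ' : KGraphData k} (φ : KGraphHom Λ Λ')
    (hι : Function.Injective Λ.ι) (hr : Function.LeftInverse Λ'.r Λ'.ι)
    (hφ : Function.Bijective φ.mor) : Function.Bijective φ.obj := by
  refine ⟨fun v w hvw => hι (hφ.1 ?_), fun w => ?_⟩
  · rw [φ.map_ι, φ.map_ι, hvw]
  · obtain ⟨p, hp⟩ := hφ.2 (Λ'.ι w)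
    exact ⟨Λ.r p, by rw [← φ.map_r, hp, hr]⟩

theorem IsKGraph.apply_comp_of_apply_ι_r {k : ℕ} {Λ : KGraphData k} (hΛ : IsKGraph Λ) {X : Type}
    {f : Λ.Mor → X} (hf : ∀ σ, f (Λ.ι (Λ.r σ)) = f σ) (a b : Λ.Mor) (h : Λ.s a = Λ.r b) :
    f (Λ.comp a b h) = f a := by
  rw [← hf, hΛ.r_comp, hf]

namespace IsFundDomain

variable {k : ℕ} {Sg : KGraphData k} {S : Type} [Monoid S] {α : S → Sg.Mor → Sg.Mor}
  {F : Set Sg.Mor}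

theorem eq_of_act_eq (hF : IsFundDomain Sg S α F) {μ ν : Sg.Mor} (hμ : μ ∈ F) (hν : ν ∈ F)
    {t u : S} (h : α t μ = α u ν) : μ = ν ∧ t = u :=
  Prod.ext_iff.1 ((hF.1 (α u ν)).unique (y₁ := (μ, t)) ⟨hμ, h⟩ (y₂ := (ν, u)) ⟨hν, rfl⟩)

theorem injOn {X : Type} {qm : Sg.Mor → X} (hF : IsFundDomain Sg S α F)
    (hq : ∀ x y, qm x = qm y → ∃ t u : S, α t x = α u y) : Set.InjOn qm F := by
  intro x hx y hy h
  obtain ⟨t, u, htu⟩ := hq x y h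
  exact (hF.eq_of_act_eq hx hy htu).1

end IsFundDomain

namespace GrossTucker

variable {k : ℕ} {Sg : KGraphData k} {S : Type} [Monoid S] {αo : S → Sg.Obj → Sg.Obj}
  {αm : S → Sg.Mor → Sg.Mor} {F : Set Sg.Mor} {Q : KGraphData k} {q : KGraphHom Sg Q}
  {c : Q.Mor → Sg.Mor} {cv : Q.Obj → Sg.Obj} {η : Q.Mor → S} {ξ : Sg.Mor → S}

theorem q_act (hone_m : αm 1 = id)
    (hqker_m : ∀ x y : Sg.Mor, q.mor x = q.mor y ↔ ∃ t u : S, αm t x = αm u y)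
    (t : S) (σ : Sg.Mor) : q.mor (αm t σ) = q.mor σ :=
  (hqker_m _ _).2 ⟨1, t, congrFun hone_m _⟩

theorem r_c (hSg : IsKGraph Sg) (hF : IsFundDomain Sg S αm F)
    (hqker_m : ∀ x y : Sg.Mor, q.mor x = q.mor y ↔ ∃ t u : S, αm t x = αm u y)
    (hcF : ∀ lam, c lam ∈ F) (hcq : ∀ lam, q.mor (c lam) = lam)
    (hcv : ∀ w, Sg.ι (cv w) = c (Q.ι w)) (lam : Q.Mor) : Sg.r (c lam) = cv (Q.r lam) := by
  refine hSg.ι_injective ?_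
  rw [hcv]
  refine hF.injOn (fun x y => (hqker_m x y).1) (hF.2 _ (hcF lam)) (hcF _) ?_
  rw [q.map_ι, hcq, ← q.map_r, hcq]

theorem xi_eq_of_act_eq (hF : IsFundDomain Sg S αm F) (hcF : ∀ lam, c lam ∈ F)
    (hξ : ∀ σ : Sg.Mor, σ = αm (ξ σ) (c (q.mor σ))) {μ σ : Sg.Mor} {t : S} (hμ : μ ∈ F)
    (h : αm t μ = σ) : ξ σ = t :=
  (hF.eq_of_act_eq (hcF _) hμ ((hξ σ).symm.trans h.symm)).2

theorem xi_c (hF : IsFundDomain Sg S αm F) (hcF : ∀ lam, c lam ∈ F)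
    (hξ : ∀ σ : Sg.Mor, σ = αm (ξ σ) (c (q.mor σ))) (hone_m : αm 1 = id) (lam : Q.Mor) :
    ξ (c lam) = 1 :=
  xi_eq_of_act_eq hF hcF hξ (hcF lam) (congrFun hone_m _)

theorem xi_act (hF : IsFundDomain Sg S αm F) (hcF : ∀ lam, c lam ∈ F)
    (hξ : ∀ σ : Sg.Mor, σ = αm (ξ σ) (c (q.mor σ)))
    (hmul_m : ∀ t u : S, αm (t * u) = αm t ∘ αm u) (t : S) (σ : Sg.Mor) :
    ξ (αm t σ) = t * ξ σ :=
  xi_eq_of_act_eq hF hcF hξ (hcF (q.mor σ)) (by rw [hmul_m, Function.comp_apply, ← hξ])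

theorem xi_ι_r (hhom : ∀ u : S, IsKGraphHom (αo u) (αm u)) (hF : IsFundDomain Sg S αm F)
    (hcF : ∀ lam, c lam ∈ F) (hξ : ∀ σ : Sg.Mor, σ = αm (ξ σ) (c (q.mor σ))) (σ : Sg.Mor) :
    ξ (Sg.ι (Sg.r σ)) = ξ σ :=
  xi_eq_of_act_eq hF hcF hξ (hF.2 _ (hcF (q.mor σ)))
    (by rw [(hhom _).map_ι, ← (hhom _).map_r, ← hξ])

theorem xi_ι_s (hhom : ∀ u : S, IsKGraphHom (αo u) (αm u))
    (hmul_m : ∀ t u : S, αm (t * u) = αm t ∘ αm u) (hF : IsFundDomain Sg S αm F)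
    (hcF : ∀ lam, c lam ∈ F) (hcv : ∀ w, Sg.ι (cv w) = c (Q.ι w))
    (hη : ∀ lam, Sg.s (c lam) = αo (η lam) (cv (Q.s lam)))
    (hξ : ∀ σ : Sg.Mor, σ = αm (ξ σ) (c (q.mor σ))) (σ : Sg.Mor) :
    ξ (Sg.ι (Sg.s σ)) = ξ σ * η (q.mor σ) :=
  xi_eq_of_act_eq hF hcF hξ (hcF _) (by
    rw [← hcv, hmul_m, Function.comp_apply, (hhom _).map_ι, ← hη, (hhom _).map_ι,
      ← (hhom _).map_s, ← hξ])

theorem eta_ι (hSg : IsKGraph Sg) (hcq : ∀ lam, q.mor (c lam) = lam)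
    (hcv : ∀ w, Sg.ι (cv w) = c (Q.ι w)) (hxi_c : ∀ lam, ξ (c lam) = 1)
    (hxi_s : ∀ σ, ξ (Sg.ι (Sg.s σ)) = ξ σ * η (q.mor σ)) (w : Q.Obj) : η (Q.ι w) = 1 :=
  calc η (Q.ι w) = ξ (c (Q.ι w)) * η (q.mor (c (Q.ι w))) := by rw [hxi_c, one_mul, hcq]
    _ = ξ (Sg.ι (Sg.s (c (Q.ι w)))) := (hxi_s _).symm
    _ = 1 := by rw [← hcv, hSg.s_ι, hcv, hxi_c]

theorem eta_comp (hSg : IsKGraph Sg) (hhom : ∀ u : S, IsKGraphHom (αo u) (αm u))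
    (hcq : ∀ lam, q.mor (c lam) = lam) (hη : ∀ lam, Sg.s (c lam) = αo (η lam) (cv (Q.s lam)))
    (hr_c : ∀ lam, Sg.r (c lam) = cv (Q.r lam))
    (hq_act : ∀ (t : S) (σ : Sg.Mor), q.mor (αm t σ) = q.mor σ)
    (hxi_c : ∀ lam, ξ (c lam) = 1) (hxi_act : ∀ (t : S) (σ : Sg.Mor), ξ (αm t σ) = t * ξ σ)
    (hxi_r : ∀ σ, ξ (Sg.ι (Sg.r σ)) = ξ σ) (hxi_s : ∀ σ, ξ (Sg.ι (Sg.s σ)) = ξ σ * η (q.mor σ))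
    (p p' : Q.Mor) (h : Q.s p = Q.r p') :
    η (Q.comp p p' h) = η p * η p' := by
  set b := αm (η p) (c p')
  have hab : Sg.s (c p) = Sg.r b := by rw [hη, h, ← hr_c, (hhom _).map_r]
  have hqb : q.mor b = p' := by rw [hq_act, hcq]
  have hqab : q.mor (Sg.comp (c p) b hab) = Q.comp p p' h := by
    rw [q.map_comp _ _ hab (by rw [hcq, hqb, h])]
    congr 1
    exact hcq p
  calc η (Q.comp p p' h) = ξ (c p) * η (q.mor (Sg.comp (c p) b hab)) := by
        rw [hxi_c, one_mul, hqab]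
    _ = ξ (Sg.ι (Sg.s (Sg.comp (c p) b hab))) := by
        rw [hxi_s, hSg.apply_comp_of_apply_ι_r hxi_r]
    _ = ξ b * η (q.mor b) := by rw [hSg.s_comp, hxi_s]
    _ = η p * η p' := by rw [hxi_act, hxi_c, mul_one, hqb]

def toSkew (hSg : IsKGraph Sg) (hxi_r : ∀ σ, ξ (Sg.ι (Sg.r σ)) = ξ σ)
    (hxi_s : ∀ σ, ξ (Sg.ι (Sg.s σ)) = ξ σ * η (q.mor σ)) : KGraphHom Sg (Q.skew S η) where
  obj v := (q.obj v, ξ (Sg.ι v))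
  mor σ := (q.mor σ, ξ σ)
  map_r σ := Prod.ext (q.map_r σ) (hxi_r σ).symm
  map_s σ := Prod.ext (q.map_s σ) (hxi_s σ).symm
  map_ι v := Prod.ext (q.map_ι v) rfl
  map_comp a b h _ := Prod.ext (q.map_comp a b h _) (hSg.apply_comp_of_apply_ι_r hxi_r a b h)
  map_d := q.map_d

end GrossTucker

open GrossTucker

theorem gross_tucker_general
    (k : ℕ) (Sg : KGraphData k) (hSg : IsKGraph Sg)
    (S : Type) [Monoid S]
    (αo : S → Sg.Obj → Sg.Obj) (αm : S → Sg.Mor → Sg.Mor)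
    (hhom : ∀ u : S, ∃ hom : KGraphHom Sg Sg, hom.obj = αo u ∧ hom.mor = αm u)
    (hone_m : αm 1 = id)
    (hmul_m : ∀ t u : S, αm (t * u) = αm t ∘ αm u)
    (F : Set Sg.Mor) (hF : IsFundDomain Sg S αm F)
    -- the quotient `k`-graph `Q = S\Σ` with quotient map `q`
    (Q : KGraphData k) (hQ : IsKGraph Q) (q : KGraphHom Sg Q)
    (hqker_m : ∀ x y : Sg.Mor, q.mor x = q.mor y ↔ ∃ t u : S, αm t x = αm u y)
    -- the section `c : S\Σ → F` of `q`, its vertex version `cv`, and `η`, `ξ`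
    (c : Q.Mor → Sg.Mor) (hcF : ∀ lam, c lam ∈ F) (hcq : ∀ lam, q.mor (c lam) = lam)
    (cv : Q.Obj → Sg.Obj) (hcv : ∀ w, Sg.ι (cv w) = c (Q.ι w))
    (η : Q.Mor → S) (hη : ∀ lam, Sg.s (c lam) = αo (η lam) (cv (Q.s lam)))
    (ξ : Sg.Mor → S) (hξ : ∀ σ : Sg.Mor, σ = αm (ξ σ) (c (q.mor σ)))
    :
    (∀ w : Q.Obj, η (Q.ι w) = 1) ∧
    (∀ (p q' : Q.Mor) (h : Q.s p = Q.r q'), η (Q.comp p q' h) = η p * η q') ∧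
    ∃ hom : KGraphHom Sg (Q.skew S η),
      hom.mor = (fun σ => (q.mor σ, ξ σ)) ∧
      hom.obj = (fun v => (q.obj v, ξ (Sg.ι v))) ∧
      Function.Bijective hom.mor ∧ Function.Bijective hom.obj ∧
      (∀ (lam : Q.Mor) (t : S), (q.mor (αm t (c lam)), ξ (αm t (c lam))) = (lam, t)) ∧
      (∀ (t : S) (σ : Sg.Mor),
        (q.mor (αm t σ), ξ (αm t σ)) = (q.mor σ, t * ξ σ)) := by
  have hq_act := q_act hone_m hqker_m
  have hxi_c := xi_c hF hcF hξ hone_m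
  have hxi_act := xi_act hF hcF hξ hmul_m
  have hxi_r := xi_ι_r hhom hF hcF hξ
  have hxi_s := xi_ι_s hhom hmul_m hF hcF hcv hη hξ
  have hφ_inv (lam : Q.Mor) (t : S) : (q.mor (αm t (c lam)), ξ (αm t (c lam))) = (lam, t) := by
    rw [hq_act, hcq, hxi_act, hxi_c, mul_one]
  have hφ_bij : Function.Bijective (toSkew hSg hxi_r hxi_s).mor := by
    refine ⟨fun x y hxy => ?_, fun p => ⟨αm p.2 (c p.1), hφ_inv p.1 p.2⟩⟩
    obtain ⟨hq, hxi⟩ := Prod.mk.inj (hxy : (q.mor x, ξ x) = (q.mor y, ξ y))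
    rw [hξ x, hξ y, hq, hxi]
  refine ⟨eta_ι hSg hcq hcv hxi_c hxi_s,
    eta_comp hSg hhom hcq hη (r_c hSg hF hqker_m hcF hcq hcv) hq_act hxi_c hxi_act hxi_r hxi_s,
    toSkew hSg hxi_r hxi_s, rfl, rfl, hφ_bij,
    (toSkew hSg hxi_r hxi_s).bijective_obj hSg.ι_injective (hQ.skew_leftInverse_r_ι S η) hφ_bij,
    hφ_inv, fun t σ => by rw [hq_act, hxi_act]⟩

/-- Gross–Tucker theorem for Ore semigroup actions on `k`-graphs: with `c`, `η`, `ξ`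
defined from a fundamental domain as in the paper, `η` is a functor and
`φ(σ) = (q(σ), ξ(σ))` is a `k`-graph isomorphism of `Σ` onto the skew product
`(S\Σ) ×_η S` with inverse `(λ, t) ↦ α_t(c(λ))`, satisfying `φ ∘ α_t = lt_t ∘ φ`. -/
theorem gross_tucker
    (k : ℕ) (Sg : KGraphData k) (hSg : IsKGraph Sg)
    (S : Type) [Monoid S] [IsCancelMul S]
    (hOre : ∀ t u : S, ∃ x y : S, x * t = y * u)
    (αo : S → Sg.Obj → Sg.Obj) (αm : S → Sg.Mor → Sg.Mor)
    (hhom : ∀ u : S, ∃ hom : KGraphHom Sg Sg, hom.obj = αo u ∧ hom.mor = αm u)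
    (hone_o : αo 1 = id) (hone_m : αm 1 = id)
    (hmul_o : ∀ t u : S, αo (t * u) = αo t ∘ αo u)
    (hmul_m : ∀ t u : S, αm (t * u) = αm t ∘ αm u)
    (hfree : ∀ (t u : S) (x : Sg.Mor), αm t x = αm u x → t = u)
    (F : Set Sg.Mor) (hF : IsFundDomain Sg S αm F)
    -- the quotient `k`-graph `Q = S\Σ` with quotient map `q`
    (Q : KGraphData k) (hQ : IsKGraph Q) (q : KGraphHom Sg Q)
    (hqsurj_m : Function.Surjective q.mor) (hqsurj_o : Function.Surjective q.obj)
    (hqker_m : ∀ x y : Sg.Mor, q.mor x = q.mor y ↔ ∃ t u : S, αm t x = αm u y)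
    (hqker_o : ∀ v w : Sg.Obj, q.obj v = q.obj w ↔ ∃ t u : S, αo t v = αo u w)
    -- the section `c : S\Σ → F` of `q`, its vertex version `cv`, and `η`, `ξ`
    (c : Q.Mor → Sg.Mor) (hcF : ∀ lam, c lam ∈ F) (hcq : ∀ lam, q.mor (c lam) = lam)
    (cv : Q.Obj → Sg.Obj) (hcv : ∀ w, Sg.ι (cv w) = c (Q.ι w))
    (η : Q.Mor → S) (hη : ∀ lam, Sg.s (c lam) = αo (η lam) (cv (Q.s lam)))
    (ξ : Sg.Mor → S) (hξ : ∀ σ : Sg.Mor, σ = αm (ξ σ) (c (q.mor σ)))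
    :
    (∀ w : Q.Obj, η (Q.ι w) = 1) ∧
    (∀ (p q' : Q.Mor) (h : Q.s p = Q.r q'), η (Q.comp p q' h) = η p * η q') ∧
    ∃ hom : KGraphHom Sg (Q.skew S η),
      hom.mor = (fun σ => (q.mor σ, ξ σ)) ∧
      hom.obj = (fun v => (q.obj v, ξ (Sg.ι v))) ∧
      Function.Bijective hom.mor ∧ Function.Bijective hom.obj ∧
      (∀ (lam : Q.Mor) (t : S), (q.mor (αm t (c lam)), ξ (αm t (c lam))) = (lam, t)) ∧
      (∀ (t : S) (σ : Sg.Mor),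
        (q.mor (αm t σ), ξ (αm t σ)) = (q.mor σ, t * ξ σ)) :=
  gross_tucker_general k Sg hSg S αo αm hhom hone_m hmul_m F hF Q hQ q hqker_m c hcF hcq cv hcv η hη
    ξ hξ
end

section
/- Let π : Λ → Σ be an injective saturated k-graph morphism between row-finite k-graphs with no sources (saturated: r(σ) ∈ π(Λ⁰) implies σ ∈ π(Λ)). Then the images {s^Σ_{π(λ)} : λ ∈ Λ} form a Cuntz–Krieger Λ-family in C*(Σ); in particular the saturation condition gives, for every v ∈ Λ⁰ and n ∈ ℕ^k, the bijection {σ ∈ Σ^n : r(σ) = π(v)} = {π(λ) : λ ∈ Λ^n, r(λ) = v}, so relation (CK4) holds for the image family. -/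
/-!
(CK1)–(CK3) pass to `T ∘ π` because `π` is a functor that is injective on vertices. For (CK4),
saturation and injectivity make `π` a bijection from `vΛⁿ` onto `π(v)Σⁿ`, so the (CK4) sum
for `Σ` at `π(v)` is, term by term, the (CK4) sum for `Λ` at `v`.
-/

def KGraphHom.IsSaturated {k : ℕ} {Λ Sg : KGraphData k} (π : KGraphHom Λ Sg) : Prop :=
  ∀ σ : Sg.Mor, (∃ v : Λ.Obj, Sg.r σ = π.obj v) → ∃ lam : Λ.Mor, σ = π.mor lam

/-- `vΛⁿ` in the usual notation. -/
def KGraphData.pathsTo {k : ℕ} (Λ : KGraphData k) (v : Λ.Obj) (n : Fin k → ℕ) : Set Λ.Mor :=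
  {p | Λ.r p = v ∧ Λ.d p = n}

namespace KGraphHom

variable {k : ℕ} {Λ Sg : KGraphData k} (π : KGraphHom Λ Sg)

theorem image_pathsTo_subset (v : Λ.Obj) (n : Fin k → ℕ) :
    π.mor '' Λ.pathsTo v n ⊆ Sg.pathsTo (π.obj v) n := by
  rintro _ ⟨lam, ⟨hr, hd⟩, rfl⟩
  exact ⟨by rw [π.map_r, hr], by rw [π.map_d, hd]⟩

theorem pathsTo_eq_image_of_isSaturated (hinj_o : Function.Injective π.obj)
    (hsat : π.IsSaturated) (v : Λ.Obj) (n : Fin k → ℕ) :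
    Sg.pathsTo (π.obj v) n = π.mor '' Λ.pathsTo v n := by
  refine subset_antisymm ?_ (π.image_pathsTo_subset v n)
  rintro σ ⟨hr, hd⟩
  obtain ⟨lam, rfl⟩ := hsat σ ⟨v, hr⟩
  refine ⟨lam, ⟨hinj_o ((π.map_r lam).symm.trans hr), ?_⟩, rfl⟩
  rwa [← π.map_d]

end KGraphHom

namespace IsCKFamily

variable {k : ℕ} {Λ Sg : KGraphData k} {A : Type*} [NonUnitalRing A] [StarRing A]
  {T : Sg.Mor → A} (π : KGraphHom Λ Sg)

theorem comp_ck4 (hT : IsCKFamily Sg A T) (hinj_m : Function.Injective π.mor)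
    (hinj_o : Function.Injective π.obj) (hsat : π.IsSaturated) (v : Λ.Obj) (n : Fin k → ℕ)
    (F : Finset Λ.Mor) (hF : ∀ p, p ∈ F ↔ (Λ.r p = v ∧ Λ.d p = n)) :
    T (π.mor (Λ.ι v)) = F.sum fun p => T (π.mor p) * star (T (π.mor p)) := by
  classical
  have hF_eq : (F : Set Λ.Mor) = Λ.pathsTo v n := Set.ext hF
  have hF_image : ∀ σ, σ ∈ F.image π.mor ↔ (Sg.r σ = π.obj v ∧ Sg.d σ = n) := fun σ => by
    rw [← Finset.mem_coe, Finset.coe_image, hF_eq,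
      ← π.pathsTo_eq_image_of_isSaturated hinj_o hsat]
    rfl
  rw [π.map_ι, hT.ck4 (π.obj v) n (F.image π.mor) hF_image,
    Finset.sum_image hinj_m.injOn]

theorem comp (hT : IsCKFamily Sg A T) (hinj_m : Function.Injective π.mor)
    (hinj_o : Function.Injective π.obj) (hsat : π.IsSaturated) :
    IsCKFamily Λ A (fun lam => T (π.mor lam)) where
  ck1_sa v := by rw [π.map_ι]; exact hT.ck1_sa _
  ck1_idem v := by rw [π.map_ι]; exact hT.ck1_idem _
  ck1_orth v w hvw := by
    rw [π.map_ι, π.map_ι]; exact hT.ck1_orth _ _ (hinj_o.ne hvw)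
  ck2 p q h := by rw [π.map_comp p q h (by rw [π.map_s, π.map_r, h])]; exact hT.ck2 _ _ _
  ck3 p := by rw [hT.ck3, π.map_ι, π.map_s]
  ck4 := hT.comp_ck4 π hinj_m hinj_o hsat

end IsCKFamily

theorem image_family_is_CK_general (k : ℕ) (Λ Sg : KGraphData k)
    (π : KGraphHom Λ Sg)
    (hinj_m : Function.Injective π.mor) (hinj_o : Function.Injective π.obj)
    (hsat : ∀ σ : Sg.Mor, (∃ v : Λ.Obj, Sg.r σ = π.obj v) → ∃ lam : Λ.Mor, σ = π.mor lam)
    (A : Type*) [NonUnitalRing A] [StarRing A]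
    (T : Sg.Mor → A) (hT : IsCKFamily Sg A T) :
    (∀ (v : Λ.Obj) (n : Fin k → ℕ),
        {σ : Sg.Mor | Sg.r σ = π.obj v ∧ Sg.d σ = n} =
          π.mor '' {lam : Λ.Mor | Λ.r lam = v ∧ Λ.d lam = n}) ∧
    IsCKFamily Λ A (fun lam => T (π.mor lam)) :=
  ⟨π.pathsTo_eq_image_of_isSaturated hinj_o hsat, hT.comp π hinj_m hinj_o hsat⟩

/-- If `π : Λ → Σ` is an injective saturated `k`-graph morphism between row-finite
`k`-graphs with no sources, then the images `{T_{π(λ)}}` of a Cuntz–Krieger `Σ`-family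
form a Cuntz–Krieger `Λ`-family; in particular saturation gives, for every vertex `v`
and degree `n`, the identification `{σ ∈ Σ^n : r(σ) = π(v)} = π({λ ∈ Λ^n : r(λ) = v})`. -/
theorem image_family_is_CK (k : ℕ) (Λ Sg : KGraphData k)
    (hΛ : IsKGraph Λ) (hSg : IsKGraph Sg)
    (hrfΛ : RowFinite Λ) (hnsΛ : NoSources Λ)
    (hrfSg : RowFinite Sg) (hnsSg : NoSources Sg)
    (π : KGraphHom Λ Sg)
    (hinj_m : Function.Injective π.mor) (hinj_o : Function.Injective π.obj)
    (hsat : ∀ σ : Sg.Mor, (∃ v : Λ.Obj, Sg.r σ = π.obj v) → ∃ lam : Λ.Mor, σ = π.mor lam)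
    (A : Type*) [NonUnitalRing A] [StarRing A]
    (T : Sg.Mor → A) (hT : IsCKFamily Sg A T) :
    (∀ (v : Λ.Obj) (n : Fin k → ℕ),
        {σ : Sg.Mor | Sg.r σ = π.obj v ∧ Sg.d σ = n} =
          π.mor '' {lam : Λ.Mor | Λ.r lam = v ∧ Λ.d lam = n}) ∧
    IsCKFamily Λ A (fun lam => T (π.mor lam)) :=
  image_family_is_CK_general k Λ Sg π hinj_m hinj_o hsat A T hT
end

section
/- Let Λ be a row-finite k-graph with no sources, Γ a group, η : Λ → Γ a functor, and {s_λ} the universal Cuntz–Krieger family for Λ. In C*(Λ) ⊗ K(ℓ²(Γ)), the elements S_{(λ,g)} := s_λ ⊗ χ_g ρ_{η(λ)} form a Cuntz–Krieger (Λ ×_η Γ)-family, where Λ ×_η Γ is the skew-product k-graph. In particular: S_{(v,g)} are mutually orthogonal projections over vertices (v,g); S_{(λ,g)} S_{(μ, gη(λ))} = S_{(λμ, g)} when s(λ) = r(μ); S_{(λ,g)}* S_{(λ,g)} = S_{(s(λ), gη(λ))}; and S_{(v,g)} = Σ_{(λ,g) ∈ (v,g)(Λ×_η Γ)^n} S_{(λ,g)}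 S_{(λ,g)}*. -/
/-!
Because `T` commutes with every `χ g` and `w h`, each `S_(λ,g) = T λ * E g (η λ)` is a product
of commuting factors, where `E g h = χ g * w h` behaves like a matrix unit:
`E g h * E (g * h) h' = E g (h * h')`, `E g h * star (E g h) = χ g` and
`star (E g h) * E g h = χ (g * h)`. Each Cuntz–Krieger relation for `S` therefore splits into the
same relation for `T` and one of these identities. For (CK4), the paths of degree `n` ending at
`(v, g)` in the skew product are exactly the `(λ, g)` with `λ ∈ vΛⁿ`, and each contributes
`T λ * star (T λ) * χ g`.
-/

section

variable {A : Type*}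

theorem IsStarProjection.mul_mul_star_mul_eq_self [Monoid A] [StarMul A] {p u : A}
    (hp : IsStarProjection p) (hu : u * star u = 1) : p * u * star (p * u) = p := by
  rw [star_mul, hp.isSelfAdjoint.star_eq, mul_assoc, ← mul_assoc u, hu, one_mul,
    hp.isIdempotentElem.eq]

theorem IsStarProjection.star_mul_mul_self_eq [Monoid A] [StarMul A] {p q u : A}
    (hp : IsStarProjection p) (hu : star u * u = 1) (hpq : u * q = p * u) :
    star (p * u) * (p * u) = q := by
  calc star (p * u) * (p * u) = star u * (p * p * u) := by
        rw [star_mul, hp.isSelfAdjoint.star_eq]; simp only [mul_assoc]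
    _ = q := by rw [hp.isIdempotentElem.eq, ← hpq, ← mul_assoc, hu, one_mul]

theorem star_mul_mul_self_of_commute [Monoid A] [StarMul A] {t e p : A}
    (ht : star t * t = p) (hpe : Commute p e) : star (t * e) * (t * e) = star e * e * p := by
  rw [star_mul, mul_assoc, ← mul_assoc (star t), ht, hpe.eq, ← mul_assoc]

theorem IsIdempotentElem.mul_mul_mul_eq_of_mul_eq [Semigroup A] {p q u : A}
    (hp : IsIdempotentElem p) (hpq : u * q = p * u) (v : A) :
    p * u * (q * v) = p * u * v := by
  rw [mul_assoc p, ← mul_assoc u, hpq, ← mul_assoc, ← mul_assoc, hp.eq, mul_assoc]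

end

section SkewFamily

variable {k : ℕ} {Λ : KGraphData k} {Γ : Type} [Group Γ] {η : Λ.Mor → Γ}
  {A : Type*} [Ring A] {T : Λ.Mor → A} {χ w : Γ → A}

variable (η T χ w) in
def skewFamily : (Λ.skew Γ η).Mor → A :=
  fun p => T p.1 * (χ p.2 * w (η p.1))

theorem skewFamily_vertex (hη1 : ∀ v, η (Λ.ι v) = 1) (hw_one : w 1 = 1)
    (v : (Λ.skew Γ η).Obj) :
    skewFamily η T χ w ((Λ.skew Γ η).ι v) = T (Λ.ι v.1) * χ v.2 := by
  simp only [skewFamily, KGraphData.skew, hη1, hw_one, mul_one]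

variable [StarRing A]

theorem isStarProjection_skewFamily_vertex (hT : IsCKFamily Λ A T)
    (hη1 : ∀ v, η (Λ.ι v) = 1) (hw_one : w 1 = 1) (hχ : ∀ g, IsStarProjection (χ g))
    (hTχ : ∀ p g, Commute (T p) (χ g)) (v : (Λ.skew Γ η).Obj) :
    IsStarProjection (skewFamily η T χ w ((Λ.skew Γ η).ι v)) := by
  rw [skewFamily_vertex hη1 hw_one]
  exact IsStarProjection.mul ⟨hT.ck1_idem _, hT.ck1_sa _⟩ (hχ _) (hTχ _ _)

theorem skewFamily_vertex_mul_vertex_of_ne (hT : IsCKFamily Λ A T)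
    (hη1 : ∀ v, η (Λ.ι v) = 1) (hw_one : w 1 = 1)
    (hχ_orth : ∀ g h, g ≠ h → χ g * χ h = 0) (hTχ : ∀ p g, Commute (T p) (χ g))
    {v v' : (Λ.skew Γ η).Obj} (hne : v ≠ v') :
    skewFamily η T χ w ((Λ.skew Γ η).ι v) *
      skewFamily η T χ w ((Λ.skew Γ η).ι v') = 0 := by
  rw [skewFamily_vertex hη1 hw_one, skewFamily_vertex hη1 hw_one,
    (hTχ _ v.2).symm.mul_mul_mul_comm]
  obtain ⟨a, g⟩ := v
  obtain ⟨b, g'⟩ := v'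
  by_cases hab : a = b
  · subst hab
    rw [hχ_orth g g' fun hg => hne (by rw [hg]), mul_zero]
  · rw [hT.ck1_orth a b hab, zero_mul]

theorem skewFamily_comp (hT : IsCKFamily Λ A T)
    (hηc : ∀ (p q : Λ.Mor) (h : Λ.s p = Λ.r q), η (Λ.comp p q h) = η p * η q)
    (hχ_idem : ∀ g, χ g * χ g = χ g) (hw_mul : ∀ g h, w (g * h) = w g * w h)
    (hwχ : ∀ g h : Γ, w h * χ (g * h) = χ g * w h)
    (hTχ : ∀ p g, Commute (T p) (χ g)) (hTw : ∀ p g, Commute (T p) (w g))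
    (p q : (Λ.skew Γ η).Mor) (h : (Λ.skew Γ η).s p = (Λ.skew Γ η).r q) :
    skewFamily η T χ w ((Λ.skew Γ η).comp p q h) =
      skewFamily η T χ w p * skewFamily η T χ w q := by
  obtain ⟨a, g⟩ := p
  obtain ⟨b, g'⟩ := q
  obtain ⟨hs, rfl⟩ := Prod.ext_iff.mp h
  have hE : χ g * w (η a) * (χ (g * η a) * w (η b)) = χ g * w (η a * η b) := by
    rw [IsIdempotentElem.mul_mul_mul_eq_of_mul_eq (hχ_idem g) (hwχ g (η a)), hw_mul, mul_assoc]
  simp only [skewFamily, KGraphData.skew]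
  rw [((hTχ b g).mul_right (hTw b (η a))).symm.mul_mul_mul_comm, hE, ← hT.ck2 a b hs, ← hηc]

theorem star_skewFamily_mul_self (hT : IsCKFamily Λ A T) (hη1 : ∀ v, η (Λ.ι v) = 1)
    (hw_one : w 1 = 1) (hχ : ∀ g, IsStarProjection (χ g))
    (hw_star_mul : ∀ g, star (w g) * w g = 1) (hwχ : ∀ g h : Γ, w h * χ (g * h) = χ g * w h)
    (hTχ : ∀ p g, Commute (T p) (χ g)) (hTw : ∀ p g, Commute (T p) (w g))
    (p : (Λ.skew Γ η).Mor) :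
    star (skewFamily η T χ w p) * skewFamily η T χ w p =
      skewFamily η T χ w ((Λ.skew Γ η).ι ((Λ.skew Γ η).s p)) := by
  rw [skewFamily_vertex hη1 hw_one]
  obtain ⟨a, g⟩ := p
  calc star (T a * (χ g * w (η a))) * (T a * (χ g * w (η a)))
      = star (χ g * w (η a)) * (χ g * w (η a)) * T (Λ.ι (Λ.s a)) :=
        star_mul_mul_self_of_commute (hT.ck3 a) ((hTχ _ g).mul_right (hTw _ _))
    _ = T (Λ.ι (Λ.s a)) * χ (g * η a) := by
        rw [(hχ g).star_mul_mul_self_eq (hw_star_mul _) (hwχ g _), (hTχ _ _).eq]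

theorem skewFamily_vertex_eq_sum [DecidableEq Λ.Mor] (hT : IsCKFamily Λ A T)
    (hη1 : ∀ v, η (Λ.ι v) = 1) (hw_one : w 1 = 1) (hχ : ∀ g, IsStarProjection (χ g))
    (hw_mul_star : ∀ g, w g * star (w g) = 1) (hTχ : ∀ p g, Commute (T p) (χ g))
    (v : (Λ.skew Γ η).Obj) (n : Fin k → ℕ) (F : Finset (Λ.skew Γ η).Mor)
    (hF : ∀ p, p ∈ F ↔ (Λ.skew Γ η).r p = v ∧ (Λ.skew Γ η).d p = n) :
    skewFamily η T χ w ((Λ.skew Γ η).ι v) =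
      F.sum fun p => skewFamily η T χ w p * star (skewFamily η T χ w p) := by
  rw [skewFamily_vertex hη1 hw_one]
  obtain ⟨a, g⟩ := v
  have hsnd : ∀ p ∈ F, p.2 = g := fun p hp => congrArg Prod.snd ((hF p).mp hp).1
  have hinj : Set.InjOn (fun p : (Λ.skew Γ η).Mor => p.1) F := fun p hp q hq hpq =>
    Prod.ext hpq ((hsnd p hp).trans (hsnd q hq).symm)
  have hbase :
      ∀ b, b ∈ F.image (fun p : (Λ.skew Γ η).Mor => p.1) ↔ Λ.r b = a ∧ Λ.d b = n := by
    refine fun b => ⟨fun hb => ?_, fun ⟨hr, hd⟩ => ?_⟩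
    · obtain ⟨p, hp, rfl⟩ := Finset.mem_image.mp hb
      obtain ⟨hr, hd⟩ := (hF p).mp hp
      exact ⟨congrArg Prod.fst hr, hd⟩
    · exact Finset.mem_image.mpr ⟨(b, g), (hF _).mpr ⟨Prod.ext hr rfl, hd⟩, rfl⟩
  have hterm : ∀ p ∈ F, T p.1 * star (T p.1) * χ g =
      skewFamily η T χ w p * star (skewFamily η T χ w p) := by
    rintro ⟨b, g'⟩ hp
    obtain rfl : g' = g := hsnd _ hp
    have hχT : Commute (χ g') (star (T b)) := by
      simpa only [(hχ g').isSelfAdjoint.star_eq] using (hTχ b g').symm.star_star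
    calc T b * star (T b) * χ g'
        = T b * (χ g' * w (η b) * star (χ g' * w (η b))) * star (T b) := by
          rw [(hχ g').mul_mul_star_mul_eq_self (hw_mul_star _), mul_assoc, ← hχT.eq,
            ← mul_assoc]
      _ = T b * (χ g' * w (η b)) * star (T b * (χ g' * w (η b))) := by
          simp only [star_mul, mul_assoc]
  calc T (Λ.ι a) * χ g
      = (∑ b ∈ F.image (fun p : (Λ.skew Γ η).Mor => p.1), T b * star (T b)) * χ g := by
        rw [← hT.ck4 a n _ hbase]
    _ = ∑ p ∈ F, T p.1 * star (T p.1) * χ g := by rw [Finset.sum_image hinj, Finset.sum_mul]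
    _ = _ := Finset.sum_congr rfl hterm

end SkewFamily

/-- The factors `s_λ ⊗ 1`, `1 ⊗ χ_g` and `1 ⊗ ρ_h` of `C*(Λ) ⊗ K(ℓ²(Γ))` are modelled by
`T λ`, `χ g` and `w h` in `B`, subject to the relations they satisfy there. -/
theorem skew_family_is_CK_general (k : ℕ) (Λ : KGraphData k)
    (Γ : Type) [Group Γ] (η : Λ.Mor → Γ)
    (hη1 : ∀ v, η (Λ.ι v) = 1)
    (hηc : ∀ (p q : Λ.Mor) (h : Λ.s p = Λ.r q), η (Λ.comp p q h) = η p * η q)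
    (B : Type*) [NormedRing B] [StarRing B]
    (T : Λ.Mor → B) (hT : IsCKFamily Λ B T)
    (χ : Γ → B)
    (hχ_sa : ∀ g, star (χ g) = χ g)
    (hχ_idem : ∀ g, χ g * χ g = χ g)
    (hχ_orth : ∀ g h, g ≠ h → χ g * χ h = 0)
    (w : Γ → B)
    (hw_one : w 1 = 1) (hw_mul : ∀ g h, w (g * h) = w g * w h)
    (hw_unitary : ∀ g, star (w g) * w g = 1 ∧ w g * star (w g) = 1)
    (hwχ : ∀ g k' : Γ, w k' * χ (g * k') = χ g * w k')
    (hTχ : ∀ (p : Λ.Mor) (g : Γ), T p * χ g = χ g * T p)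
    (hTw : ∀ (p : Λ.Mor) (g : Γ), T p * w g = w g * T p) :
    IsCKFamily (Λ.skew Γ η) B (fun p => T p.1 * (χ p.2 * w (η p.1))) := by
  classical
  have hχ : ∀ g, IsStarProjection (χ g) := fun g => ⟨hχ_idem g, hχ_sa g⟩
  have hvert := isStarProjection_skewFamily_vertex hT hη1 hw_one hχ hTχ
  exact
    { ck1_sa := fun v => (hvert v).isSelfAdjoint.star_eq
      ck1_idem := fun v => (hvert v).isIdempotentElem.eq
      ck1_orth := fun _ _ => skewFamily_vertex_mul_vertex_of_ne hT hη1 hw_one hχ_orth hTχ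
      ck2 := skewFamily_comp hT hηc hχ_idem hw_mul hwχ hTχ hTw
      ck3 := star_skewFamily_mul_self hT hη1 hw_one hχ (fun g => (hw_unitary g).1) hwχ hTχ hTw
      ck4 := skewFamily_vertex_eq_sum hT hη1 hw_one hχ (fun g => (hw_unitary g).2) hTχ }

/-- The elements `S_{(λ,g)} := s_λ ⊗ χ_g ρ_{η(λ)}` form a Cuntz–Krieger
`(Λ ×_η Γ)`-family.  Here the tensor factors are modelled by a Cuntz–Krieger
`Λ`-family `T`, mutually orthogonal projections `χ_g` and a unitary homomorphism
`w` (right translations) satisfying `w_k χ_{g k} = χ_g w_k`, with `T` commuting with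
both `χ` and `w` (as happens in `C*(Λ) ⊗ K(ℓ²(Γ))`). -/
theorem skew_family_is_CK (k : ℕ) (Λ : KGraphData k) (hΛ : IsKGraph Λ)
    (hrf : RowFinite Λ) (hns : NoSources Λ)
    (Γ : Type) [Group Γ] (η : Λ.Mor → Γ)
    (hη1 : ∀ v, η (Λ.ι v) = 1)
    (hηc : ∀ (p q : Λ.Mor) (h : Λ.s p = Λ.r q), η (Λ.comp p q h) = η p * η q)
    (B : Type*) [NormedRing B] [StarRing B] [CStarRing B] [CompleteSpace B]
    (T : Λ.Mor → B) (hT : IsCKFamily Λ B T)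
    (χ : Γ → B)
    (hχ_sa : ∀ g, star (χ g) = χ g)
    (hχ_idem : ∀ g, χ g * χ g = χ g)
    (hχ_orth : ∀ g h, g ≠ h → χ g * χ h = 0)
    (w : Γ → B)
    (hw_one : w 1 = 1) (hw_mul : ∀ g h, w (g * h) = w g * w h)
    (hw_unitary : ∀ g, star (w g) * w g = 1 ∧ w g * star (w g) = 1)
    (hwχ : ∀ g k' : Γ, w k' * χ (g * k') = χ g * w k')
    (hTχ : ∀ (p : Λ.Mor) (g : Γ), T p * χ g = χ g * T p)
    (hTw : ∀ (p : Λ.Mor) (g : Γ), T p * w g = w g * T p) :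
    IsCKFamily (Λ.skew Γ η) B (fun p => T p.1 * (χ p.2 * w (η p.1))) :=
  skew_family_is_CK_general k Λ Γ η hη1 hηc B T hT χ hχ_sa hχ_idem hχ_orth w hw_one hw_mul
    hw_unitary hwχ hTχ hTw
end

section
/- Suppose S ⊆ Γ with Γ = S⁻¹S (Ore embedding), Λ is a k-graph, and η : Λ → S ⊆ Γ is a functor. Then the subgraph Ω := Λ ×_η S of the skew product Λ ×_η Γ is saturated (if r(λ,g) ∈ Ω⁰, i.e., g ∈ S, then (λ,g) ∈ Ω), satisfies lt_t(Ω) ⊆ Ω for all t ∈ S, and ⋃_{t∈S} lt_t⁻¹(Ω) = Λ ×_η Γ. -/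
theorem Submonoid.exists_mul_mem_of_eq_inv_mul {Γ : Type*} [Group Γ] (S : Submonoid Γ) {g : Γ}
    (hg : ∃ s t : S, g = (s : Γ)⁻¹ * (t : Γ)) : ∃ t ∈ S, t * g ∈ S := by
  obtain ⟨s, t, rfl⟩ := hg
  exact ⟨s, s.2, by simpa only [mul_inv_cancel_left] using t.2⟩

theorem skew_subgraph_saturated_general (k : ℕ) (Λ : KGraphData k)
    (Γ : Type) [Group Γ] (S : Submonoid Γ)
    (hS : ∀ g : Γ, ∃ s t : S, g = (s : Γ)⁻¹ * (t : Γ))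
    (η : Λ.Mor → Γ) :
    (∀ p : (Λ.skew Γ η).Mor,
        ((Λ.skew Γ η).r p ∈ {v : (Λ.skew Γ η).Obj | v.2 ∈ S}) →
          p ∈ {p : (Λ.skew Γ η).Mor | p.2 ∈ S}) ∧
    (∀ t ∈ S, ∀ p ∈ {p : (Λ.skew Γ η).Mor | p.2 ∈ S},
        (((p : (Λ.skew Γ η).Mor).1, t * p.2) : (Λ.skew Γ η).Mor) ∈
          {p : (Λ.skew Γ η).Mor | p.2 ∈ S}) ∧
    (∀ p : (Λ.skew Γ η).Mor, ∃ t ∈ S,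
        ((p.1, t * p.2) : (Λ.skew Γ η).Mor) ∈ {p : (Λ.skew Γ η).Mor | p.2 ∈ S}) :=
  -- `r (λ, g) = (r λ, g)`, so saturation holds definitionally.
  ⟨fun _ hp => hp, fun _ ht _ hp => S.mul_mem ht hp,
    fun p => S.exists_mul_mem_of_eq_inv_mul (hS p.2)⟩

/-- If `Γ = S⁻¹S` and `η : Λ → S ⊆ Γ` is a functor, then `Ω := Λ ×_η S` is a
saturated subgraph of the skew product `Λ ×_η Γ` with `lt_t(Ω) ⊆ Ω` for `t ∈ S` and
`⋃_{t ∈ S} lt_t⁻¹(Ω) = Λ ×_η Γ`. -/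
theorem skew_subgraph_saturated (k : ℕ) (Λ : KGraphData k) (hΛ : IsKGraph Λ)
    (Γ : Type) [Group Γ] (S : Submonoid Γ)
    (hS : ∀ g : Γ, ∃ s t : S, g = (s : Γ)⁻¹ * (t : Γ))
    (η : Λ.Mor → Γ)
    (hη1 : ∀ v, η (Λ.ι v) = 1)
    (hηc : ∀ (p q : Λ.Mor) (h : Λ.s p = Λ.r q), η (Λ.comp p q h) = η p * η q)
    (hηS : ∀ p, η p ∈ S) :
    (∀ p : (Λ.skew Γ η).Mor,
        ((Λ.skew Γ η).r p ∈ {v : (Λ.skew Γ η).Obj | v.2 ∈ S}) →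
          p ∈ {p : (Λ.skew Γ η).Mor | p.2 ∈ S}) ∧
    (∀ t ∈ S, ∀ p ∈ {p : (Λ.skew Γ η).Mor | p.2 ∈ S},
        (((p : (Λ.skew Γ η).Mor).1, t * p.2) : (Λ.skew Γ η).Mor) ∈
          {p : (Λ.skew Γ η).Mor | p.2 ∈ S}) ∧
    (∀ p : (Λ.skew Γ η).Mor, ∃ t ∈ S,
        ((p.1, t * p.2) : (Λ.skew Γ η).Mor) ∈ {p : (Λ.skew Γ η).Mor | p.2 ∈ S}) :=
  skew_subgraph_saturated_general k Λ Γ S hS η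
end

section
/- Let α be a free action of an Ore semigroup S on a k-graph Σ with fundamental domain F, and let c, η, ξ be defined by q(c(λ)) = λ, s(c(λ)) = α_{η(λ)}(c(s(λ))), σ = α_{ξ(σ)}(c(q(σ))). Then η : S\Σ → S is a functor: η([v]) = 1 for vertices [v], and η(λμ) = η(λ)η(μ) whenever s(λ) = r(μ) in S\Σ. -/
/-- In the Gross–Tucker setup, `η : S\Σ → S` is a functor: `η([v]) = 1` for
vertices and `η(λμ) = η(λ)η(μ)` for composable `λ, μ` in `S\Σ`. -/
theorem eta_is_functor
    (k : ℕ) (Sg : KGraphData k) (hSg : IsKGraph Sg)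
    (S : Type) [Monoid S] [IsCancelMul S]
    (hOre : ∀ t u : S, ∃ x y : S, x * t = y * u)
    (αo : S → Sg.Obj → Sg.Obj) (αm : S → Sg.Mor → Sg.Mor)
    (hhom : ∀ u : S, ∃ hom : KGraphHom Sg Sg, hom.obj = αo u ∧ hom.mor = αm u)
    (hone_o : αo 1 = id) (hone_m : αm 1 = id)
    (hmul_o : ∀ t u : S, αo (t * u) = αo t ∘ αo u)
    (hmul_m : ∀ t u : S, αm (t * u) = αm t ∘ αm u)
    (hfree : ∀ (t u : S) (x : Sg.Mor), αm t x = αm u x → t = u)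
    (F : Set Sg.Mor) (hF : IsFundDomain Sg S αm F)
    -- the quotient `k`-graph `Q = S\Σ` with quotient map `q`
    (Q : KGraphData k) (hQ : IsKGraph Q) (q : KGraphHom Sg Q)
    (hqsurj_m : Function.Surjective q.mor) (hqsurj_o : Function.Surjective q.obj)
    (hqker_m : ∀ x y : Sg.Mor, q.mor x = q.mor y ↔ ∃ t u : S, αm t x = αm u y)
    (hqker_o : ∀ v w : Sg.Obj, q.obj v = q.obj w ↔ ∃ t u : S, αo t v = αo u w)
    -- the section `c : S\Σ → F` of `q`, its vertex version `cv`, and `η`, `ξ`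
    (c : Q.Mor → Sg.Mor) (hcF : ∀ lam, c lam ∈ F) (hcq : ∀ lam, q.mor (c lam) = lam)
    (cv : Q.Obj → Sg.Obj) (hcv : ∀ w, Sg.ι (cv w) = c (Q.ι w))
    (η : Q.Mor → S) (hη : ∀ lam, Sg.s (c lam) = αo (η lam) (cv (Q.s lam)))
    (ξ : Sg.Mor → S) (hξ : ∀ σ : Sg.Mor, σ = αm (ξ σ) (c (q.mor σ)))
    :
    (∀ w : Q.Obj, η (Q.ι w) = 1) ∧
    (∀ (p q' : Q.Mor) (h : Q.s p = Q.r q'), η (Q.comp p q' h) = η p * η q') := by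

  have hmι : ∀ (t : S) (v : Sg.Obj), αm t (Sg.ι v) = Sg.ι (αo t v) := by
    intro t v
    obtain ⟨hom, ho, hm⟩ := hhom t
    rw [← ho, ← hm, hom.map_ι]
  have hms : ∀ (t : S) (x : Sg.Mor), Sg.s (αm t x) = αo t (Sg.s x) := by
    intro t x
    obtain ⟨hom, ho, hm⟩ := hhom t
    rw [← ho, ← hm, hom.map_s]
  have hmr : ∀ (t : S) (x : Sg.Mor), Sg.r (αm t x) = αo t (Sg.r x) := by
    intro t x
    obtain ⟨hom, ho, hm⟩ := hhom t
    rw [← ho, ← hm, hom.map_r]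
  have hfree_o : ∀ (t u : S) (v : Sg.Obj), αo t v = αo u v → t = u := by
    intro t u v hv
    exact hfree t u (Sg.ι v) (by rw [hmι, hmι, hv])
  have hqα : ∀ (t : S) (x : Sg.Mor), q.mor (αm t x) = q.mor x := by
    intro t x
    exact (hqker_m _ _).2 ⟨1, t, by rw [hone_m]; rfl⟩
  have hqcv : ∀ w, q.obj (cv w) = w := by
    intro w
    have h1 : Q.ι (q.obj (cv w)) = Q.ι w := by rw [← q.map_ι, hcv, hcq]
    have h2 := congrArg Q.r h1
    rwa [hQ.r_ι, hQ.r_ι] at h2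
  have hrc : ∀ lam, Sg.r (c lam) = cv (Q.r lam) := by
    intro lam
    have hv : q.obj (Sg.r (c lam)) = q.obj (cv (Q.r lam)) := by
      rw [← q.map_r, hcq, hqcv]
    obtain ⟨t, u, htu⟩ := (hqker_o _ _).1 hv
    have h1 : Sg.ι (Sg.r (c lam)) ∈ F := hF.2 _ (hcF lam)
    have h2 : Sg.ι (cv (Q.r lam)) ∈ F := by rw [hcv]; exact hcF _
    have heq : αm t (Sg.ι (Sg.r (c lam))) = αm u (Sg.ι (cv (Q.r lam))) := by
      rw [hmι, hmι, htu]
    obtain ⟨p0, hp0, hp0u⟩ := hF.1 (αm t (Sg.ι (Sg.r (c lam))))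
    have e1 := hp0u (Sg.ι (Sg.r (c lam)), t) ⟨h1, rfl⟩
    have e2 := hp0u (Sg.ι (cv (Q.r lam)), u) ⟨h2, heq.symm⟩
    have e3 : Sg.ι (Sg.r (c lam)) = Sg.ι (cv (Q.r lam)) :=
      congrArg Prod.fst (e1.trans e2.symm)
    have e4 := congrArg Sg.r e3
    rwa [hSg.r_ι, hSg.r_ι] at e4
  have comp_congr : ∀ (a a' b b' : Q.Mor) (h1 : Q.s a = Q.r b) (h2 : Q.s a' = Q.r b'),
      a = a' → b = b' → Q.comp a b h1 = Q.comp a' b' h2 := by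
    intro a a' b b' h1 h2 ha hb
    subst ha; subst hb; rfl
  constructor
  · intro w
    have h1 : Sg.s (c (Q.ι w)) = αo (η (Q.ι w)) (cv (Q.s (Q.ι w))) := hη _
    rw [← hcv, hSg.s_ι, hQ.s_ι] at h1
    have h2 : αo (η (Q.ι w)) (cv w) = αo 1 (cv w) := by
      rw [hone_o]; exact h1.symm
    exact hfree_o _ _ _ h2
  · intro p q' h
    have hjun : Sg.s (c p) = Sg.r (αm (η p) (c q')) := by
      rw [hη, hmr, hrc, h]
    set σ := Sg.comp (c p) (αm (η p) (c q')) hjun with hσ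
    have h' : Q.s (q.mor (c p)) = Q.r (q.mor (αm (η p) (c q'))) := by
      rw [q.map_s, q.map_r, hjun]
    have hqσ : q.mor σ = Q.comp p q' h := by
      rw [hσ, q.map_comp _ _ hjun h']
      exact comp_congr _ _ _ _ _ _ (hcq p) ((hqα _ _).trans (hcq q'))
    have hξσ := hξ σ
    rw [hqσ] at hξσ
    have hrσ1 : Sg.r σ = cv (Q.r p) := by rw [hσ, hSg.r_comp, hrc]
    have hrσ2 : Sg.r σ = αo (ξ σ) (cv (Q.r p)) := by
      conv_lhs => rw [hξσ]
      rw [hmr, hrc, hQ.r_comp]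
    have hξ1 : ξ σ = 1 := by
      refine hfree_o _ _ (cv (Q.r p)) ?_
      rw [hone_o, ← hrσ2, hrσ1]; rfl
    have hsσ1 : Sg.s σ = αo (η p * η q') (cv (Q.s q')) := by
      rw [hσ, hSg.s_comp, hms, hη, hmul_o]; rfl
    have hsσ2 : Sg.s σ = αo (η (Q.comp p q' h)) (cv (Q.s q')) := by
      conv_lhs => rw [hξσ, hξ1, hone_m]
      show Sg.s (c (Q.comp p q' h)) = _
      rw [hη, hQ.s_comp]
    exact hfree_o _ _ _ (hsσ2.symm.trans hsσ1)
end
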